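/- arXiv:math/0310285 — 2 statements merged into one kernel-verified Lean document; each statement's English description precedes it below -/
import Mathlib

section
/- Sawtooth form of the divisor-weighted Euler formula: Let a, b be real numbers with 0 ≤ a < b, and let f : ℝ → ℂ be differentiable on [a,b] with derivative f′ integrable on [a,b]. Then Σ_{a < n ≤ b} d(n) f(n) = ( Σ_{1 ≤ m ≤ b} 1/m ) ∫_a^b f(u) du + Σ_{1 ≤ m ≤ b} { ∫_a^b ψ(u/m)·f′(u) du + f(a)·ψ(a/m) − f(b)·ψ(b/m) }, where the sums over m are over positive integers m ≤ b and the sum over n is over integers n with a < n ≤ b. -/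
open MeasureTheory intervalIntegral

/-- The sawtooth function `ψ(x) = x - ⌊x⌋ - 1/2`. -/
noncomputable def saw (x : ℝ) : ℝ := x - ⌊x⌋ - 1/2

lemma euler_chunk (α β : ℝ) (hαβ : α < β) (hβ : β ≤ ⌊α⌋ + 1) (g g' : ℝ → ℂ)
    (hg : ∀ x ∈ Set.Icc α β, HasDerivWithinAt g (g' x) (Set.Icc α β) x)
    (hg' : IntervalIntegrable g' volume α β) :
    ∑ k ∈ Finset.Ioc ⌊α⌋ ⌊β⌋, g (k : ℝ)
      = (∫ u in α..β, g u) + (∫ u in α..β, (saw u : ℂ) * g' u)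
        + g α * (saw α : ℂ) - g β * (saw β : ℂ) := by
  set n : ℤ := ⌊α⌋ with hn
  have hIcc : Set.uIcc α β = Set.Icc α β := Set.uIcc_of_le hαβ.le
  -- a.e. rewrite of the saw integral
  have h1 : (∫ u in α..β, (saw u : ℂ) * g' u)
      = ∫ u in α..β, ((u : ℂ) - (n : ℂ) - 1/2) * g' u := by
    apply intervalIntegral.integral_congr_ae
    have hae : ∀ᵐ x : ℝ ∂volume, x ≠ β := by
      rw [MeasureTheory.ae_iff]
      simp only [ne_eq, not_not]
      have : {x : ℝ | x = β} = {β} := by ext x; simp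
      rw [this]; exact Real.volume_singleton
    filter_upwards [hae] with x hx hmem
    rw [Set.uIoc_of_le hαβ.le] at hmem
    have hx2 : x < β := lt_of_le_of_ne hmem.2 hx
    have hfx : ⌊x⌋ = n := by
      rw [Int.floor_eq_iff]
      exact ⟨le_trans (Int.floor_le α) hmem.1.le, by push_cast; linarith⟩
    rw [saw, hfx]
    push_cast
    ring
  -- integration by parts
  have hylin : ∀ x ∈ Set.uIcc α β,
      HasDerivWithinAt (fun t : ℝ => (t : ℂ) - (n : ℂ) - 1/2) 1 (Set.uIcc α β) x := by
    intro x _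
    have h0 : HasDerivAt (fun t : ℝ => (t : ℂ)) 1 x := by
      simpa using (hasDerivAt_id x).ofReal_comp
    exact ((h0.sub_const _).sub_const _).hasDerivWithinAt
  have h2 : (∫ u in α..β, ((u : ℂ) - (n : ℂ) - 1/2) * g' u)
      = ((β : ℂ) - (n : ℂ) - 1/2) * g β - ((α : ℂ) - (n : ℂ) - 1/2) * g α
        - ∫ u in α..β, 1 * g u := by
    apply intervalIntegral.integral_mul_deriv_eq_deriv_mul_of_hasDerivWithinAt
      hylin (fun x hx => by rw [hIcc] at hx ⊢; exact hg x hx)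
      intervalIntegrable_const hg'
  have h3 : (∫ u in α..β, (1:ℂ) * g u) = ∫ u in α..β, g u := by simp
  rw [h1, h2, h3]
  -- case analysis on ⌊β⌋
  have hnβ : n ≤ ⌊β⌋ := Int.floor_le_floor hαβ.le
  have hβn : ⌊β⌋ ≤ n + 1 := by
    have := Int.floor_le_floor hβ
    simpa using this.trans_eq (by push_cast [Int.floor_intCast]; simp)
  have hsawα : (saw α : ℂ) = (α : ℂ) - (n : ℂ) - 1/2 := by rw [saw]; push_cast; ring
  rcases eq_or_lt_of_le hnβ with hcase | hcase
  · -- ⌊β⌋ = n, empty sum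
    rw [← hcase, Finset.Ioc_self, Finset.sum_empty]
    have hsawβ : (saw β : ℂ) = (β : ℂ) - (n : ℂ) - 1/2 := by
      rw [saw, ← hcase]; push_cast; ring
    rw [hsawα, hsawβ]; ring
  · -- ⌊β⌋ = n + 1, hence β = n + 1
    have hβeq : ⌊β⌋ = n + 1 := le_antisymm hβn hcase
    have hβval : β = (n : ℝ) + 1 := by
      have h4 : ((n : ℝ) + 1) ≤ β := by exact_mod_cast (by push_cast; exact_mod_cast Int.le_floor.mp hβeq.ge : ((n+1 : ℤ) : ℝ) ≤ β)
      linarith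
    have hsum : Finset.Ioc n ⌊β⌋ = {n + 1} := by
      rw [hβeq]
      ext k; simp only [Finset.mem_Ioc, Finset.mem_singleton]; omega
    rw [hsum, Finset.sum_singleton]
    have hval : ((n + 1 : ℤ) : ℝ) = β := by rw [hβval]; push_cast; ring
    have hsawβ : (saw β : ℂ) = -(1/2) := by
      rw [saw, hβeq, hβval]; push_cast; ring
    rw [hval, hsawα, hsawβ, hβval]
    push_cast
    ring

lemma saw_measurable : Measurable fun x : ℝ => (saw x : ℂ) := by
  have h : Measurable (saw : ℝ → ℝ) := by
    have h2 : (saw : ℝ → ℝ) = fun x => Int.fract x - 1/2 := by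
      funext x; rw [saw, Int.fract]
    rw [h2]
    exact measurable_fract.sub measurable_const
  exact Complex.measurable_ofReal.comp h

lemma saw_bound (x : ℝ) : ‖(saw x : ℂ)‖ ≤ 1 := by
  rw [Complex.norm_real]
  have h1 : (0:ℝ) ≤ x - ⌊x⌋ := sub_nonneg.mpr (Int.floor_le x)
  have h2 : x - ⌊x⌋ < 1 := by
    have := Int.lt_floor_add_one x; linarith
  rw [Real.norm_eq_abs, abs_le]
  unfold saw
  constructor <;> linarith

lemma saw_intble {g' : ℝ → ℂ} {a b : ℝ} (c : ℝ)
    (h : IntervalIntegrable g' volume a b) :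
    IntervalIntegrable (fun u => (saw (u / c) : ℂ) * g' u) volume a b := by
  rw [intervalIntegrable_iff] at h ⊢
  exact h.bdd_mul ((saw_measurable.comp (measurable_id.div_const c)).aestronglyMeasurable)
    (c := 1) (Filter.Eventually.of_forall fun x => saw_bound _)

lemma saw_intble' {g' : ℝ → ℂ} {a b : ℝ}
    (h : IntervalIntegrable g' volume a b) :
    IntervalIntegrable (fun u => (saw u : ℂ) * g' u) volume a b := by
  have := saw_intble (g' := g') (a := a) (b := b) 1 h
  simpa using this

lemma euler_saw_aux (d : ℕ) : ∀ (α β : ℝ), α < β → ⌊β⌋ - ⌊α⌋ ≤ d → ∀ (g g' : ℝ → ℂ),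
    (∀ x ∈ Set.Icc α β, HasDerivWithinAt g (g' x) (Set.Icc α β) x) →
    IntervalIntegrable g' volume α β →
    ∑ k ∈ Finset.Ioc ⌊α⌋ ⌊β⌋, g (k : ℝ)
      = (∫ u in α..β, g u) + (∫ u in α..β, (saw u : ℂ) * g' u)
        + g α * (saw α : ℂ) - g β * (saw β : ℂ) := by
  induction d with
  | zero =>
    intro α β hαβ hd g g' hg hg'
    apply euler_chunk α β hαβ _ g g' hg hg'
    have h1 : ⌊β⌋ ≤ ⌊α⌋ := by omega
    have := Int.lt_floor_add_one β
    have h2 : (⌊β⌋ : ℝ) ≤ (⌊α⌋ : ℝ) := by exact_mod_cast h1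
    linarith
  | succ d ih =>
    intro α β hαβ hd g g' hg hg'
    by_cases hc : β ≤ ⌊α⌋ + 1
    · exact euler_chunk α β hαβ hc g g' hg hg'
    push_neg at hc
    set c : ℤ := ⌊α⌋ + 1 with hcdef
    have hαc : α < (c : ℝ) := by
      have := Int.lt_floor_add_one α; rw [hcdef]; push_cast; linarith
    have hcβ : (c : ℝ) < β := by rw [hcdef]; push_cast; linarith
    have hfc : ⌊(c : ℝ)⌋ = c := Int.floor_intCast c
    have hsub1 : Set.Icc α (c:ℝ) ⊆ Set.Icc α β := Set.Icc_subset_Icc le_rfl hcβ.le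
    have hsub2 : Set.Icc (c:ℝ) β ⊆ Set.Icc α β := Set.Icc_subset_Icc hαc.le le_rfl
    have hu1 : Set.uIcc α (c:ℝ) ⊆ Set.uIcc α β := by
      rw [Set.uIcc_of_le hαc.le, Set.uIcc_of_le hαβ.le]; exact hsub1
    have hu2 : Set.uIcc (c:ℝ) β ⊆ Set.uIcc α β := by
      rw [Set.uIcc_of_le hcβ.le, Set.uIcc_of_le hαβ.le]; exact hsub2
    have hg1 : ∀ x ∈ Set.Icc α (c:ℝ), HasDerivWithinAt g (g' x) (Set.Icc α (c:ℝ)) x :=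
      fun x hx => (hg x (hsub1 hx)).mono hsub1
    have hg2 : ∀ x ∈ Set.Icc (c:ℝ) β, HasDerivWithinAt g (g' x) (Set.Icc (c:ℝ) β) x :=
      fun x hx => (hg x (hsub2 hx)).mono hsub2
    have hg'1 : IntervalIntegrable g' volume α (c:ℝ) := hg'.mono_set hu1
    have hg'2 : IntervalIntegrable g' volume (c:ℝ) β := hg'.mono_set hu2
    have hcle : (c:ℝ) ≤ ↑⌊α⌋ + 1 := by rw [hcdef]; push_cast; exact le_refl _
    have step := euler_chunk α (c:ℝ) hαc hcle g g' hg1 hg'1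
    have indh := ih (c:ℝ) β hcβ (by rw [hfc]; omega) g g' hg2 hg'2
    -- continuity of g for integrability
    have hgc : ContinuousOn g (Set.Icc α β) := fun x hx => (hg x hx).continuousWithinAt
    have hgint1 : IntervalIntegrable g volume α (c:ℝ) :=
      (hgc.mono hsub1).intervalIntegrable_of_Icc hαc.le
    have hgint2 : IntervalIntegrable g volume (c:ℝ) β :=
      (hgc.mono hsub2).intervalIntegrable_of_Icc hcβ.le
    have hint1 : (∫ u in α..(c:ℝ), g u) + (∫ u in (c:ℝ)..β, g u) = ∫ u in α..β, g u :=
      intervalIntegral.integral_add_adjacent_intervals hgint1 hgint2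
    have hint2 : (∫ u in α..(c:ℝ), (saw u : ℂ) * g' u) + (∫ u in (c:ℝ)..β, (saw u : ℂ) * g' u)
        = ∫ u in α..β, (saw u : ℂ) * g' u :=
      intervalIntegral.integral_add_adjacent_intervals (saw_intble' hg'1) (saw_intble' hg'2)
    have hcfb : c ≤ ⌊β⌋ := by rw [← hfc]; exact Int.floor_le_floor hcβ.le
    have hsum : (∑ k ∈ Finset.Ioc ⌊α⌋ c, g (k : ℝ)) + ∑ k ∈ Finset.Ioc c ⌊β⌋, g (k : ℝ)
        = ∑ k ∈ Finset.Ioc ⌊α⌋ ⌊β⌋, g (k : ℝ) := by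
      rw [← Finset.Ioc_union_Ioc_eq_Ioc (by omega : ⌊α⌋ ≤ c) hcfb,
        Finset.sum_union]
      rw [Finset.disjoint_left]
      intro x hx1 hx2
      simp only [Finset.mem_Ioc] at hx1 hx2
      omega
    rw [hfc] at step indh
    rw [← hsum, step, indh, ← hint1, ← hint2]
    ring

lemma euler_saw (α β : ℝ) (hαβ : α < β) (g g' : ℝ → ℂ)
    (hg : ∀ x ∈ Set.Icc α β, HasDerivWithinAt g (g' x) (Set.Icc α β) x)
    (hg' : IntervalIntegrable g' volume α β) :
    ∑ k ∈ Finset.Ioc ⌊α⌋ ⌊β⌋, g (k : ℝ)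
      = (∫ u in α..β, g u) + (∫ u in α..β, (saw u : ℂ) * g' u)
        + g α * (saw α : ℂ) - g β * (saw β : ℂ) :=
  euler_saw_aux (⌊β⌋ - ⌊α⌋).toNat α β hαβ (Int.self_le_toNat _) g g' hg hg'

lemma per_m (a b : ℝ) (hab : a < b) (f f' : ℝ → ℂ)
    (hf : ∀ x ∈ Set.Icc a b, HasDerivWithinAt f (f' x) (Set.Icc a b) x)
    (hf' : IntervalIntegrable f' volume a b)
    (m : ℤ) (hm : 1 ≤ m) :
    ∑ k ∈ Finset.Ioc ⌊a / (m:ℝ)⌋ ⌊b / (m:ℝ)⌋, f ((m:ℝ) * k)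
      = (1 / (m:ℂ)) * (∫ u in a..b, f u)
        + ((∫ u in a..b, (saw (u / (m:ℝ)) : ℂ) * f' u)
            + f a * (saw (a / (m:ℝ)) : ℂ) - f b * (saw (b / (m:ℝ)) : ℂ)) := by
  set c : ℝ := (m : ℝ) with hcdef
  have hc0 : 0 < c := by rw [hcdef]; exact_mod_cast hm.trans_lt' (by norm_num)
  have hcne : c ≠ 0 := hc0.ne'
  have hαβ : a / c < b / c := by exact div_lt_div_of_pos_right hab hc0
  set g : ℝ → ℂ := fun t => f (c * t) with hgdef
  set g' : ℝ → ℂ := fun t => c • f' (c * t) with hg'def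
  have hmaps : ∀ x ∈ Set.Icc (a/c) (b/c), c * x ∈ Set.Icc a b := by
    intro x hx
    constructor
    · calc a = c * (a / c) := by field_simp
        _ ≤ c * x := by nlinarith [hx.1]
    · calc c * x ≤ c * (b / c) := by nlinarith [hx.2]
        _ = b := by field_simp
  have hg : ∀ x ∈ Set.Icc (a/c) (b/c), HasDerivWithinAt g (g' x) (Set.Icc (a/c) (b/c)) x := by
    intro x hx
    have hinner : HasDerivWithinAt (fun t : ℝ => c * t) c (Set.Icc (a/c) (b/c)) x := by
      simpa using ((hasDerivAt_id x).const_mul c).hasDerivWithinAt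
    exact (hf (c*x) (hmaps x hx)).scomp x hinner (fun y hy => hmaps y hy)
  have hg' : IntervalIntegrable g' volume (a/c) (b/c) := by
    have := (hf'.comp_mul_left (c := c)).smul c
    exact this
  have key := euler_saw (a/c) (b/c) hαβ g g' hg hg'
  have hca : c * (a / c) = a := by field_simp
  have hcb : c * (b / c) = b := by field_simp
  have hga : g (a/c) = f a := by rw [hgdef]; simp only; rw [hca]
  have hgb : g (b/c) = f b := by rw [hgdef]; simp only; rw [hcb]
  have hint1 : (∫ u in a/c..b/c, g u) = (1 / (m:ℂ)) * ∫ u in a..b, f u := by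
    rw [hgdef]
    rw [intervalIntegral.integral_comp_mul_left f hcne, hca, hcb]
    rw [Complex.real_smul]
    push_cast [hcdef]
    ring
  have hint2 : (∫ u in a/c..b/c, (saw u : ℂ) * g' u)
      = ∫ u in a..b, (saw (u / c) : ℂ) * f' u := by
    have h2 := intervalIntegral.integral_comp_mul_left (a := a/c) (b := b/c)
      (fun x => (saw (x / c) : ℂ) * f' x) hcne
    simp only [mul_div_cancel_left₀ _ hcne] at h2
    rw [hca, hcb] at h2
    have h1 : (fun u => (saw u : ℂ) * g' u)
        = fun u => c • ((saw u : ℂ) * f' (c * u)) := by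
      funext u
      simp only [hg'def]
      rw [mul_smul_comm]
    rw [h1, intervalIntegral.integral_smul, h2, smul_smul,
      mul_inv_cancel₀ hcne, one_smul]
  rw [key, hga, hgb, hint1, hint2]
  ring

lemma card_divisors_eq (B n : ℤ) (h1 : 1 ≤ n) (h2 : n ≤ B) :
    ((Finset.Icc (1:ℤ) B).filter (· ∣ n)).card = n.toNat.divisors.card := by
  apply Finset.card_bij (fun m _ => m.toNat)
  · intro m hm
    simp only [Finset.mem_filter, Finset.mem_Icc] at hm
    rw [Nat.mem_divisors]
    constructor
    · rw [← Int.natCast_dvd_natCast, Int.toNat_of_nonneg (by omega), Int.toNat_of_nonneg (by omega)]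
      exact hm.2
    · omega
  · intro m hm m' hm' hmm
    simp only [Finset.mem_filter, Finset.mem_Icc] at hm hm'
    omega
  · intro k hk
    rw [Nat.mem_divisors] at hk
    refine ⟨(k : ℤ), ?_, by simp⟩
    simp only [Finset.mem_filter, Finset.mem_Icc]
    have hk1 : 1 ≤ k := Nat.one_le_iff_ne_zero.mpr (fun h => by simp [h] at hk; omega)
    have hkd : (k : ℤ) ∣ n := by
      have := Int.natCast_dvd_natCast.mpr hk.1
      rwa [Int.toNat_of_nonneg (by omega)] at this
    refine ⟨⟨by exact_mod_cast hk1, ?_⟩, hkd⟩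
    have := Int.le_of_dvd (by omega) hkd
    omega

lemma sum_filter_eq (a b : ℝ) (hab : a < b) (f : ℝ → ℂ) (m : ℤ) (hm : 1 ≤ m) :
    ∑ n ∈ (Finset.Ioc ⌊a⌋ ⌊b⌋).filter (m ∣ ·), f (n : ℝ)
      = ∑ k ∈ Finset.Ioc ⌊a / (m:ℝ)⌋ ⌊b / (m:ℝ)⌋, f ((m:ℝ) * k) := by
  have hc0 : (0:ℝ) < (m:ℝ) := by exact_mod_cast hm.trans_lt' (by norm_num)
  apply Finset.sum_nbij' (fun n => n / m) (fun k => m * k)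
  · intro n hn
    simp only [Finset.mem_filter, Finset.mem_Ioc] at hn
    obtain ⟨⟨hn1, hn2⟩, hdvd⟩ := hn
    obtain ⟨k, rfl⟩ := hdvd
    rw [Int.mul_ediv_cancel_left _ (by omega)]
    simp only [Finset.mem_Ioc]
    rw [Int.floor_lt] at hn1 ⊢
    rw [Int.le_floor] at hn2 ⊢
    constructor
    · rw [div_lt_iff₀ hc0]
      push_cast at hn1 ⊢
      linarith
    · rw [le_div_iff₀ hc0]
      push_cast at hn2 ⊢
      linarith
  · intro k hk
    simp only [Finset.mem_Ioc] at hk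
    obtain ⟨hk1, hk2⟩ := hk
    rw [Int.floor_lt, div_lt_iff₀ hc0] at hk1
    rw [Int.le_floor, le_div_iff₀ hc0] at hk2
    simp only [Finset.mem_filter, Finset.mem_Ioc]
    refine ⟨⟨?_, ?_⟩, Dvd.intro k rfl⟩
    · rw [Int.floor_lt]; push_cast; push_cast at hk1; linarith
    · rw [Int.le_floor]; push_cast; push_cast at hk2; linarith
  · intro n hn
    simp only [Finset.mem_filter] at hn
    exact Int.mul_ediv_cancel' hn.2
  · intro k hk
    exact Int.mul_ediv_cancel_left _ (by omega)
  · intro n hn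
    simp only [Finset.mem_filter] at hn
    rw [show ((m:ℝ) * ((n / m : ℤ) : ℝ)) = ((m * (n / m) : ℤ) : ℝ) by push_cast; ring,
      Int.mul_ediv_cancel' hn.2]


/-- Sawtooth form of the divisor-weighted Euler formula. -/
theorem divisor_euler_sawtooth
    (a b : ℝ) (ha0 : 0 ≤ a) (hab : a < b) (f f' : ℝ → ℂ)
    (hf : ∀ x ∈ Set.Icc a b, HasDerivWithinAt f (f' x) (Set.Icc a b) x)
    (hf' : IntervalIntegrable f' MeasureTheory.volume a b) :
    ∑ n ∈ Finset.Ioc ⌊a⌋ ⌊b⌋, (n.toNat.divisors.card : ℂ) * f (n : ℝ)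
      = (∑ m ∈ Finset.Icc (1 : ℤ) ⌊b⌋, 1 / (m : ℂ)) * (∫ u in a..b, f u)
        + ∑ m ∈ Finset.Icc (1 : ℤ) ⌊b⌋,
            ((∫ u in a..b, (saw (u / (m : ℝ)) : ℂ) * f' u)
              + f a * (saw (a / (m : ℝ)) : ℂ)
              - f b * (saw (b / (m : ℝ)) : ℂ)) := by
  have hB : (0:ℤ) ≤ ⌊a⌋ := Int.floor_nonneg.mpr ha0
  calc ∑ n ∈ Finset.Ioc ⌊a⌋ ⌊b⌋, (n.toNat.divisors.card : ℂ) * f (n : ℝ)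
      = ∑ n ∈ Finset.Ioc ⌊a⌋ ⌊b⌋, ∑ m ∈ (Finset.Icc (1:ℤ) ⌊b⌋).filter (· ∣ n), f (n : ℝ) := by
        apply Finset.sum_congr rfl
        intro n hn
        simp only [Finset.mem_Ioc] at hn
        rw [Finset.sum_const, ← card_divisors_eq ⌊b⌋ n (by omega) hn.2, nsmul_eq_mul]
    _ = ∑ m ∈ Finset.Icc (1:ℤ) ⌊b⌋, ∑ n ∈ (Finset.Ioc ⌊a⌋ ⌊b⌋).filter (m ∣ ·), f (n : ℝ) := by
        simp_rw [Finset.sum_filter]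
        exact Finset.sum_comm
    _ = ∑ m ∈ Finset.Icc (1:ℤ) ⌊b⌋,
          ((1 / (m:ℂ)) * (∫ u in a..b, f u)
            + ((∫ u in a..b, (saw (u / (m : ℝ)) : ℂ) * f' u)
              + f a * (saw (a / (m : ℝ)) : ℂ) - f b * (saw (b / (m : ℝ)) : ℂ))) := by
        apply Finset.sum_congr rfl
        intro m hm
        simp only [Finset.mem_Icc] at hm
        rw [sum_filter_eq a b hab f m hm.1, per_m a b hab f f' hf hf' m hm.1]
    _ = _ := by rw [Finset.sum_add_distrib, ← Finset.sum_mul]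
end

section
/- Bernoulli-polynomial form of the weighted Euler–Maclaurin formula: Let k ≥ 1 be an integer, χ : ℤ → ℂ with χ(n + k) = χ(n) for all n, let R ≥ 0 be an integer, let a < b be real numbers, and let f : ℝ → ℂ have continuous derivatives up to order R + 1 on [a,b]. Then Σ_{a < n ≤ b} χ(n) f(n) = Σ_{l=1}^{k} χ(l) · { (1/k)∫_a^b f(u) du + Σ_{r=0}^{R} (−1)^{r+1} k^r ( ψ_r((b − l)/k)·f^{(r)}(b) − ψ_r((a − l)/k)·f^{(r)}(a) ) + (−k)^R ∫_a^b ψ_R((u − l)/k)·f^{(R+1)}(u) du }, where the outer sum is over integers n with a < n ≤ b. -/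
open MeasureTheory intervalIntegral

/-- The periodized Bernoulli polynomial `ψ_r(x) = B_{r+1}({x})/(r+1)!`, where `{x}` is the
fractional part of `x` and `B_{r+1}` is the Bernoulli polynomial of degree `r+1`. -/
noncomputable def psir (r : ℕ) (x : ℝ) : ℝ :=
  (Polynomial.aeval (Int.fract x) (Polynomial.bernoulli (r + 1))) / (r + 1).factorial

lemma psir_eq (r : ℕ) (x : ℝ) :
    psir r x = bernoulliFun (r+1) (Int.fract x) / (r+1).factorial := by
  rw [psir, bernoulliFun, Polynomial.aeval_def, Polynomial.eval₂_eq_eval_map]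

lemma measurable_psir (r : ℕ) : Measurable (psir r) := by
  have : psir r = fun x => bernoulliFun (r+1) (Int.fract x) / (r+1).factorial := funext (psir_eq r)
  rw [this]
  exact ((Polynomial.continuous _).measurable.comp measurable_fract).div_const _

lemma psir_bound (r : ℕ) : ∃ C : ℝ, ∀ x, |psir r x| ≤ C := by
  have hcont : ContinuousOn (fun y => bernoulliFun (r+1) y / (r+1).factorial) (Set.Icc (0:ℝ) 1) :=
    (Polynomial.continuousOn _).div_const _
  obtain ⟨C, hC⟩ := (isCompact_Icc (a := (0:ℝ)) (b := 1)).exists_bound_of_continuousOn hcont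
  refine ⟨C, fun x => ?_⟩
  rw [psir_eq]
  exact hC _ ⟨(Int.fract_nonneg x), (Int.fract_lt_one x).le⟩

lemma continuous_psir (r : ℕ) : Continuous (psir (r+1)) := by
  have : Continuous ((fun y => bernoulliFun (r+2) y / (r+2).factorial) ∘ Int.fract) := by
    apply ContinuousOn.comp_fract''
    · exact (Polynomial.continuousOn _).div_const _
    · rw [bernoulliFun_endpoints_eq_of_ne_one (by omega)]
  have h2 : psir (r+1) = (fun y => bernoulliFun (r+2) y / (r+2).factorial) ∘ Int.fract := by
    funext x; exact psir_eq (r+1) x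
  rw [h2]; exact this

lemma hasDerivAt_psir (r : ℕ) (x : ℝ) (hx : ∀ m : ℤ, (m:ℝ) ≠ x) :
    HasDerivAt (psir (r+1)) (psir r x) x := by
  have hfl : (⌊x⌋ : ℝ) < x := (Int.floor_le x).lt_of_ne (hx ⌊x⌋)
  have hmem : Set.Ioo ((⌊x⌋:ℝ)) (⌊x⌋+1) ∈ nhds x :=
    Ioo_mem_nhds hfl (Int.lt_floor_add_one x)
  have heq : psir (r+1) =ᶠ[nhds x]
      (fun y => bernoulliFun (r+2) (y - ⌊x⌋) / (r+2).factorial) := by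
    filter_upwards [hmem] with y hy
    rw [psir_eq]
    congr 2
    rw [Int.fract, Int.floor_eq_iff.mpr ⟨hy.1.le, by exact_mod_cast hy.2⟩]
  have hg : HasDerivAt (fun y => bernoulliFun (r+2) (y - (⌊x⌋:ℝ)) / (r+2).factorial)
      (psir r x) x := by
    have h1 := ((hasDerivAt_bernoulliFun (r+2) (x - ⌊x⌋)).comp x
      ((hasDerivAt_id x).sub_const ((⌊x⌋:ℝ)))).div_const ((r+2).factorial : ℝ)
    refine h1.congr_deriv ?_
    symm
    rw [psir_eq, Int.fract]
    have h2 : ((r+2).factorial : ℝ) = (r+2) * (r+1).factorial := by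
      rw [show r+2 = (r+1)+1 from rfl, Nat.factorial_succ]; push_cast; ring
    have h3 : (r + 2 - 1) = r + 1 := by omega
    rw [h3, h2]
    have := (r+1).factorial_pos
    field_simp
    push_cast
    ring
  exact hg.congr_of_eventuallyEq heq

lemma intervalIntegrable_psir_mul (r : ℕ) {a b : ℝ} (hab : a ≤ b) {φ : ℝ → ℂ}
    (hφ : ContinuousOn φ (Set.Icc a b)) :
    IntervalIntegrable (fun u => (psir r u : ℂ) * φ u) volume a b := by
  have h1 : IntervalIntegrable φ volume a b :=
    (by rwa [Set.uIcc_of_le hab] : ContinuousOn φ (Set.uIcc a b)).intervalIntegrable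
  rw [intervalIntegrable_iff] at h1 ⊢
  obtain ⟨C, hC⟩ := psir_bound r
  refine h1.bdd_mul ?_ (c := C) (Filter.Eventually.of_forall fun u => ?_)
  · exact (Complex.measurable_ofReal.comp (measurable_psir r)).aestronglyMeasurable
  · rw [Complex.norm_real]; exact hC u

lemma ftc_finite (S : Finset ℝ) : ∀ {a b : ℝ}, a ≤ b → ∀ {g g' : ℝ → ℂ},
    ContinuousOn g (Set.Icc a b) →
    (∀ x ∈ Set.Ioo a b, x ∉ S → HasDerivAt g (g' x) x) →
    IntervalIntegrable g' volume a b →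
    ∫ u in a..b, g' u = g b - g a := by
  induction S using Finset.induction_on with
  | empty =>
    intro a b hab g g' hcont hd hint
    exact integral_eq_sub_of_hasDerivAt_of_le hab hcont
      (fun x hx => hd x hx (Finset.notMem_empty x)) hint
  | @insert s S hs IH =>
    intro a b hab g g' hcont hd hint
    by_cases hsab : s ∈ Set.Ioo a b
    · have hmem1 : Set.uIcc a s ⊆ Set.uIcc a b := by
        apply Set.uIcc_subset_uIcc Set.left_mem_uIcc
        rw [Set.uIcc_of_le hab]; exact ⟨hsab.1.le, hsab.2.le⟩
      have hmem2 : Set.uIcc s b ⊆ Set.uIcc a b := by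
        apply Set.uIcc_subset_uIcc _ Set.right_mem_uIcc
        rw [Set.uIcc_of_le hab]; exact ⟨hsab.1.le, hsab.2.le⟩
      have h1 : ∫ u in a..s, g' u = g s - g a := by
        refine IH hsab.1.le (hcont.mono (Set.Icc_subset_Icc le_rfl hsab.2.le))
          (fun x hx hxS => hd x ⟨hx.1, hx.2.trans hsab.2⟩ ?_) (hint.mono_set hmem1)
        simp only [Finset.mem_insert, not_or]
        exact ⟨ne_of_lt hx.2, hxS⟩
      have h2 : ∫ u in s..b, g' u = g b - g s := by
        refine IH hsab.2.le (hcont.mono (Set.Icc_subset_Icc hsab.1.le le_rfl))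
          (fun x hx hxS => hd x ⟨hsab.1.trans hx.1, hx.2⟩ ?_) (hint.mono_set hmem2)
        simp only [Finset.mem_insert, not_or]
        exact ⟨(ne_of_gt hx.1), hxS⟩
      rw [← integral_add_adjacent_intervals (hint.mono_set hmem1) (hint.mono_set hmem2), h1, h2]
      ring
    · refine IH hab hcont (fun x hx hxS => hd x hx ?_) hint
      simp only [Finset.mem_insert, not_or]
      exact ⟨fun h => hsab (h ▸ hx), hxS⟩

/-- the finite set of integers in an interval, as reals -/
noncomputable def intPts (a b : ℝ) : Finset ℝ := (Finset.Icc ⌈a⌉ ⌊b⌋).image (Int.cast : ℤ → ℝ)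

lemma not_int_of_not_mem_intPts {a b x : ℝ} (hx : x ∈ Set.Ioo a b) (h : x ∉ intPts a b) :
    ∀ m : ℤ, (m:ℝ) ≠ x := by
  intro m hm
  apply h
  rw [intPts, Finset.mem_image]
  refine ⟨m, ?_, hm⟩
  rw [Finset.mem_Icc]
  constructor
  · rw [Int.ceil_le]; rw [← hm] at hx; exact hx.1.le
  · rw [Int.le_floor]; rw [← hm] at hx; exact hx.2.le

/-- Integration by parts against the periodized Bernoulli function. -/
lemma ibp_psir (r : ℕ) {a b : ℝ} (hab : a ≤ b) {φ φ' : ℝ → ℂ}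
    (hφ : ContinuousOn φ (Set.Icc a b))
    (hd : ∀ x ∈ Set.Ioo a b, HasDerivAt φ (φ' x) x)
    (hφ' : ContinuousOn φ' (Set.Icc a b)) :
    ∫ u in a..b, (psir r u : ℂ) * φ u
      = (psir (r+1) b : ℂ) * φ b - (psir (r+1) a : ℂ) * φ a
        - ∫ u in a..b, (psir (r+1) u : ℂ) * φ' u := by
  have hint1 := intervalIntegrable_psir_mul r hab hφ
  have hint2 := intervalIntegrable_psir_mul (r+1) hab hφ'
  have key : ∫ u in a..b, ((psir r u : ℂ) * φ u + (psir (r+1) u : ℂ) * φ' u)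
      = (psir (r+1) b : ℂ) * φ b - (psir (r+1) a : ℂ) * φ a := by
    refine ftc_finite (intPts a b) hab (g := fun u => (psir (r+1) u : ℂ) * φ u) ?_ ?_ (hint1.add hint2)
    · exact ((Complex.continuous_ofReal.comp (continuous_psir r)).continuousOn).mul hφ
    · intro x hx hxS
      have hder := (hasDerivAt_psir r x (not_int_of_not_mem_intPts hx hxS)).ofReal_comp
      exact hder.mul (hd x hx)
  rw [integral_add hint1 hint2] at key
  linear_combination key

lemma psir_zero (x : ℝ) : psir 0 x = Int.fract x - 1/2 := by
  simp [psir, Polynomial.bernoulli_def, Finset.sum_range_succ, bernoulli_one]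
  ring

lemma ae_not_int : ∀ᵐ u : ℝ, ∀ m : ℤ, (m:ℝ) ≠ u := by
  rw [MeasureTheory.ae_iff]
  refine MeasureTheory.measure_mono_null (fun x hx => ?_)
    ((Set.countable_range (Int.cast : ℤ → ℝ)).measure_zero _)
  simp only [Set.mem_setOf_eq, not_forall, not_not] at hx
  obtain ⟨m, hm⟩ := hx
  exact ⟨m, hm⟩

/-- Euler–Maclaurin, base case `R = 0`. -/
lemma em_zero {a b : ℝ} (hab : a < b) {F0 F1 : ℝ → ℂ}
    (hd : ∀ x ∈ Set.Icc a b, HasDerivWithinAt F0 (F1 x) (Set.Icc a b) x)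
    (hc : ContinuousOn F1 (Set.Icc a b)) :
    ∑ m ∈ Finset.Ioc ⌊a⌋ ⌊b⌋, F0 (m:ℝ)
      = (∫ u in a..b, F0 u)
        - ((psir 0 b : ℂ) * F0 b - (psir 0 a : ℂ) * F0 a)
        + ∫ u in a..b, (psir 0 u : ℂ) * F1 u := by
  have hF0c : ContinuousOn F0 (Set.Icc a b) := fun x hx => (hd x hx).continuousWithinAt
  have hF1int : IntervalIntegrable F1 volume a b :=
    (by rwa [Set.uIcc_of_le hab.le] : ContinuousOn F1 (Set.uIcc a b)).intervalIntegrable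
  have hF0int : IntervalIntegrable F0 volume a b :=
    (by rwa [Set.uIcc_of_le hab.le] : ContinuousOn F0 (Set.uIcc a b)).intervalIntegrable
  have hsub : ∀ c ∈ Set.Icc a b, Set.uIcc c b ⊆ Set.uIcc a b := by
    intro c hc'
    apply Set.uIcc_subset_uIcc _ Set.right_mem_uIcc
    rw [Set.uIcc_of_le hab.le]; exact hc'
  have hFTC : ∀ c ∈ Set.Icc a b, ∫ u in c..b, F1 u = F0 b - F0 c := by
    intro c hc'
    refine integral_eq_sub_of_hasDerivAt_of_le hc'.2
      (hF0c.mono (Set.Icc_subset_Icc hc'.1 le_rfl)) (fun x hx => ?_)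
      (hF1int.mono_set (hsub c hc'))
    have hx' : x ∈ Set.Ioo a b := ⟨lt_of_le_of_lt hc'.1 hx.1, hx.2⟩
    exact (hd x (Set.Ioo_subset_Icc_self hx')).hasDerivAt (Icc_mem_nhds hx'.1 hx'.2)
  have hmemIcc : ∀ m ∈ Finset.Ioc ⌊a⌋ ⌊b⌋, (m:ℝ) ∈ Set.Icc a b := by
    intro m hm
    rw [Finset.mem_Ioc] at hm
    exact ⟨(Int.floor_lt.mp hm.1).le, Int.le_floor.mp hm.2⟩
  have key1 : ∀ m ∈ Finset.Ioc ⌊a⌋ ⌊b⌋,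
      F0 (m:ℝ) = (F0 b - ∫ u in a..b, F1 u)
        + ∫ u in a..b, Set.indicator {x : ℝ | x ≤ (m:ℝ)} F1 u := by
    intro m hm
    have hmem := hmemIcc m hm
    have h1 : ∫ u in a..b, Set.indicator {x : ℝ | x ≤ (m:ℝ)} F1 u = ∫ u in a..(m:ℝ), F1 u :=
      integral_indicator hmem
    have h2 : (∫ u in a..(m:ℝ), F1 u) + ∫ u in (m:ℝ)..b, F1 u = ∫ u in a..b, F1 u := by
      apply integral_add_adjacent_intervals _ (hF1int.mono_set (hsub _ hmem))
      apply hF1int.mono_set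
      apply Set.uIcc_subset_uIcc Set.left_mem_uIcc
      rw [Set.uIcc_of_le hab.le]; exact hmem
    have h3 := hFTC (m:ℝ) hmem
    linear_combination h3 - h2 - h1
  have hind : ∀ m : ℤ, IntervalIntegrable (Set.indicator {x : ℝ | x ≤ (m:ℝ)} F1) volume a b := by
    intro m
    have := hF1int
    rw [intervalIntegrable_iff] at this ⊢
    exact this.indicator measurableSet_Iic
  have hsum : ∑ m ∈ Finset.Ioc ⌊a⌋ ⌊b⌋, F0 (m:ℝ)
      = ((Finset.Ioc ⌊a⌋ ⌊b⌋).card : ℂ) * (F0 b - ∫ u in a..b, F1 u)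
        + ∫ u in a..b, (∑ m ∈ Finset.Ioc ⌊a⌋ ⌊b⌋, Set.indicator {x : ℝ | x ≤ (m:ℝ)} F1 u) := by
    rw [Finset.sum_congr rfl key1, Finset.sum_add_distrib, Finset.sum_const, nsmul_eq_mul,
      ← intervalIntegral.integral_finset_sum (fun m _ => hind m)]
  have hcard : ((Finset.Ioc ⌊a⌋ ⌊b⌋).card : ℂ) = ((⌊b⌋ : ℂ) - (⌊a⌋ : ℂ)) := by
    rw [Int.card_Ioc]
    have h := sub_nonneg.mpr (Int.floor_le_floor hab.le)
    exact_mod_cast congrArg (Int.cast : ℤ → ℂ) (Int.toNat_of_nonneg h)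
  have hGcongr : ∫ u in a..b, (∑ m ∈ Finset.Ioc ⌊a⌋ ⌊b⌋, Set.indicator {x : ℝ | x ≤ (m:ℝ)} F1 u)
      = ∫ u in a..b, ((((⌊b⌋:ℝ) + 1/2 - u : ℝ) : ℂ) * F1 u + (psir 0 u : ℂ) * F1 u) := by
    apply intervalIntegral.integral_congr_ae
    filter_upwards [ae_not_int] with u hu hmem
    rw [Set.uIoc_of_le hab.le] at hmem
    have hfl : (Finset.Ioc ⌊a⌋ ⌊b⌋).filter (fun m : ℤ => u ≤ (m:ℝ)) = Finset.Ioc ⌊u⌋ ⌊b⌋ := by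
      ext n
      simp only [Finset.mem_filter, Finset.mem_Ioc]
      constructor
      · rintro ⟨⟨_, hn2⟩, hun⟩
        have : u < n := hun.lt_of_ne (fun h => hu n h.symm)
        exact ⟨Int.floor_lt.mpr this, hn2⟩
      · rintro ⟨h1, h2⟩
        have hu2 : u < n := Int.floor_lt.mp h1
        have : ⌊a⌋ ≤ ⌊u⌋ := Int.floor_le_floor hmem.1.le
        exact ⟨⟨lt_of_le_of_lt this h1, h2⟩, hu2.le⟩
    calc (∑ m ∈ Finset.Ioc ⌊a⌋ ⌊b⌋, Set.indicator {x : ℝ | x ≤ (m:ℝ)} F1 u)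
        = ∑ m ∈ Finset.Ioc ⌊a⌋ ⌊b⌋, (if u ≤ (m:ℝ) then F1 u else 0) := by
          simp [Set.indicator_apply, Set.mem_setOf_eq]
      _ = ∑ m ∈ (Finset.Ioc ⌊a⌋ ⌊b⌋).filter (fun m : ℤ => u ≤ (m:ℝ)), F1 u :=
          (Finset.sum_filter _ _).symm
      _ = ((Finset.Ioc ⌊u⌋ ⌊b⌋).card : ℂ) * F1 u := by
          rw [hfl, Finset.sum_const, nsmul_eq_mul]
      _ = ((((⌊b⌋:ℝ) + 1/2 - u : ℝ) : ℂ) * F1 u + (psir 0 u : ℂ) * F1 u) := by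
          have hcard2 : ((Finset.Ioc ⌊u⌋ ⌊b⌋).card : ℂ) = ((⌊b⌋ : ℂ) - (⌊u⌋ : ℂ)) := by
            rw [Int.card_Ioc]
            have h := sub_nonneg.mpr (Int.floor_le_floor hmem.2)
            exact_mod_cast congrArg (Int.cast : ℤ → ℂ) (Int.toNat_of_nonneg h)
          rw [hcard2, psir_zero, Int.fract]
          push_cast
          ring
  have hsmint : IntervalIntegrable (fun u => ((((⌊b⌋:ℝ) + 1/2 - u : ℝ)) : ℂ) * F1 u) volume a b := by
    apply ContinuousOn.intervalIntegrable
    rw [Set.uIcc_of_le hab.le]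
    apply ContinuousOn.mul _ hc
    exact Complex.continuous_ofReal.comp_continuousOn (by fun_prop)
  have hpsiint := intervalIntegrable_psir_mul 0 hab.le hc
  have hGsplit : ∫ u in a..b, ((((⌊b⌋:ℝ) + 1/2 - u : ℝ) : ℂ) * F1 u + (psir 0 u : ℂ) * F1 u)
      = (∫ u in a..b, ((((⌊b⌋:ℝ) + 1/2 - u : ℝ)) : ℂ) * F1 u)
        + ∫ u in a..b, (psir 0 u : ℂ) * F1 u := integral_add hsmint hpsiint
  have hsm : ∫ u in a..b, ((((⌊b⌋:ℝ) + 1/2 - u : ℝ)) : ℂ) * F1 u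
      = ((((⌊b⌋:ℝ) + 1/2 - b : ℝ)) : ℂ) * F0 b - ((((⌊b⌋:ℝ) + 1/2 - a : ℝ)) : ℂ) * F0 a
        + ∫ u in a..b, F0 u := by
    have hg : ∀ x ∈ Set.Ioo a b,
        HasDerivAt (fun u : ℝ => ((((⌊b⌋:ℝ) + 1/2 - u : ℝ)) : ℂ) * F0 u)
          (-F0 x + ((((⌊b⌋:ℝ) + 1/2 - x : ℝ)) : ℂ) * F1 x) x := by
      intro x hx
      have h1 : HasDerivAt (fun u : ℝ => ((((⌊b⌋:ℝ) + 1/2 - u : ℝ)) : ℂ)) (-1) x := by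
        have h2 : HasDerivAt (fun u : ℝ => (u : ℂ)) 1 x := Complex.ofRealCLM.hasDerivAt
        have h3 := h2.const_sub (((⌊b⌋:ℝ) + 1/2 : ℝ) : ℂ)
        simp only [Complex.ofReal_sub, Complex.ofReal_add] at *
        convert h3 using 2 <;> push_cast <;> ring
      have h4 := (hd x (Set.Ioo_subset_Icc_self hx)).hasDerivAt (Icc_mem_nhds hx.1 hx.2)
      have := h1.mul h4
      refine this.congr_deriv ?_
      ring
    have hnegint : IntervalIntegrable (fun u => -(F0 u)) volume a b := hF0int.neg
    have hgint : IntervalIntegrable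
        (fun u => -F0 u + ((((⌊b⌋:ℝ) + 1/2 - u : ℝ)) : ℂ) * F1 u) volume a b :=
      hnegint.add hsmint
    have hcontg : ContinuousOn (fun u : ℝ => ((((⌊b⌋:ℝ) + 1/2 - u : ℝ)) : ℂ) * F0 u)
        (Set.Icc a b) :=
      (Complex.continuous_ofReal.comp_continuousOn
        (by fun_prop : ContinuousOn (fun u : ℝ => ((⌊b⌋:ℝ) + 1/2 - u : ℝ)) (Set.Icc a b))).mul hF0c
    have hftc := integral_eq_sub_of_hasDerivAt_of_le
      (f := fun u : ℝ => ((((⌊b⌋:ℝ) + 1/2 - u : ℝ)) : ℂ) * F0 u)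
      hab.le hcontg hg hgint
    rw [integral_add hnegint hsmint, intervalIntegral.integral_neg] at hftc
    linear_combination hftc
  have hab1 := hFTC a ⟨le_rfl, hab.le⟩
  rw [hsum, hGcongr, hGsplit, hsm, hcard, hab1, psir_zero, psir_zero, Int.fract, Int.fract]
  push_cast
  ring

/-- Euler–Maclaurin with explicit derivative tower. -/
lemma em_base (R : ℕ) {a b : ℝ} (hab : a < b) {F : ℕ → ℝ → ℂ}
    (hd : ∀ r ≤ R, ∀ x ∈ Set.Icc a b, HasDerivWithinAt (F r) (F (r+1) x) (Set.Icc a b) x)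
    (hc : ContinuousOn (F (R+1)) (Set.Icc a b)) :
    ∑ m ∈ Finset.Ioc ⌊a⌋ ⌊b⌋, F 0 (m:ℝ)
      = (∫ u in a..b, F 0 u)
        + (∑ r ∈ Finset.range (R+1), (-1:ℂ)^(r+1) *
            ((psir r b : ℂ) * F r b - (psir r a : ℂ) * F r a))
        + (-1:ℂ)^R * ∫ u in a..b, (psir R u : ℂ) * F (R+1) u := by
  induction R with
  | zero =>
      rw [em_zero hab (fun x hx => hd 0 le_rfl x hx) hc, Finset.sum_range_one]
      ring
  | succ R IH =>
      have hIH := IH (fun r hr => hd r (hr.trans (Nat.le_succ R)))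
        (fun x hx => (hd (R+1) le_rfl x hx).continuousWithinAt)
      rw [hIH]
      have hibp := ibp_psir R hab.le (φ := F (R+1)) (φ' := F (R+2))
        (fun x hx => (hd (R+1) le_rfl x hx).continuousWithinAt)
        (fun x hx => (hd (R+1) le_rfl x (Set.Ioo_subset_Icc_self hx)).hasDerivAt
          (Icc_mem_nhds hx.1 hx.2))
        hc
      rw [Finset.sum_range_succ (n := R+1), hibp]
      ring

lemma mem_Ioc_div_iff {k : ℕ} (hk : 1 ≤ k) {a b : ℝ} (l m : ℤ) :
    m ∈ Finset.Ioc ⌊(a - l)/(k:ℝ)⌋ ⌊(b - l)/(k:ℝ)⌋ ↔ (a < l + k * m ∧ (l:ℝ) + k * m ≤ b) := by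
  have hk0 : (0:ℝ) < k := by exact_mod_cast hk
  rw [Finset.mem_Ioc, Int.floor_lt, Int.le_floor, div_lt_iff₀ hk0, le_div_iff₀ hk0]
  constructor
  · rintro ⟨h1, h2⟩; constructor <;> nlinarith
  · rintro ⟨h1, h2⟩; constructor <;> nlinarith

lemma sum_Ioc_reindex (k : ℕ) (hk : 1 ≤ k) {a b : ℝ} (g : ℤ → ℂ) :
    ∑ n ∈ Finset.Ioc ⌊a⌋ ⌊b⌋, g n
      = ∑ l ∈ Finset.Icc (1:ℤ) (k:ℤ), ∑ m ∈ Finset.Ioc ⌊(a - l)/(k:ℝ)⌋ ⌊(b - l)/(k:ℝ)⌋,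
          g (l + k * m) := by
  have hk0 : (0:ℤ) < k := by exact_mod_cast hk
  rw [Finset.sum_sigma' (Finset.Icc (1:ℤ) (k:ℤ))
    (fun l => Finset.Ioc ⌊(a - l)/(k:ℝ)⌋ ⌊(b - l)/(k:ℝ)⌋) (fun l m => g (l + k * m))]
  symm
  refine Finset.sum_nbij' (fun p => p.1 + k * p.2)
    (fun n => ⟨(n - 1) % k + 1, (n - 1) / k⟩) ?_ ?_ ?_ ?_ ?_
  · rintro ⟨l, m⟩ hp
    rw [Finset.mem_sigma] at hp
    dsimp only at hp ⊢
    obtain ⟨hl, hm⟩ := hp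
    rw [mem_Ioc_div_iff hk] at hm
    rw [Finset.mem_Ioc, Int.floor_lt, Int.le_floor]
    push_cast
    push_cast at hm
    exact hm
  · rintro n hn
    rw [Finset.mem_Ioc, Int.floor_lt, Int.le_floor] at hn
    rw [Finset.mem_sigma]
    dsimp only
    constructor
    · rw [Finset.mem_Icc]
      have h1 := Int.emod_nonneg (n - 1) (by omega : (k:ℤ) ≠ 0)
      have h2 := Int.emod_lt_of_pos (n - 1) hk0
      omega
    · rw [mem_Ioc_div_iff hk]
      have h3 := Int.mul_ediv_add_emod (n - 1) k
      have heq : ((n - 1) % k + 1 : ℤ) + k * ((n - 1) / k) = n := by omega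
      rw [← heq] at hn
      push_cast at hn ⊢
      exact hn
  · rintro ⟨l, m⟩ hp
    rw [Finset.mem_sigma, Finset.mem_Icc] at hp
    dsimp only at hp
    obtain ⟨⟨hl1, hl2⟩, _⟩ := hp
    have h1 : (l + k * m - 1) % k = l - 1 := by
      have : l + k * m - 1 = (l - 1) + k * m := by ring
      rw [this, Int.add_mul_emod_self_left, Int.emod_eq_of_lt (by omega) (by omega)]
    have h2 : (l + k * m - 1) / k = m := by
      have : l + k * m - 1 = (l - 1) + k * m := by ring
      rw [this, Int.add_mul_ediv_left _ _ (by omega : (k:ℤ) ≠ 0),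
        Int.ediv_eq_zero_of_lt (by omega) (by omega), zero_add]
    have hfst : (l + k * m - 1) % k + 1 = l := by rw [h1]; omega
    exact Sigma.ext hfst (heq_of_eq h2)
  · rintro n hn
    have h3 := Int.mul_ediv_add_emod (n - 1) k
    show ((n - 1) % k + 1) + (k:ℤ) * ((n - 1) / k) = n
    omega
  · rintro ⟨l, m⟩ _
    rfl

lemma chi_periodic {k : ℕ} (χ : ℤ → ℂ) (hχ : ∀ n : ℤ, χ (n + (k : ℤ)) = χ n) :
    ∀ l m : ℤ, χ (l + k * m) = χ l := by
  have hneg : ∀ n : ℤ, χ (n - k) = χ n := by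
    intro n
    have := hχ (n - k)
    rw [sub_add_cancel] at this
    exact this.symm
  intro l m
  induction m using Int.induction_on with
  | zero => simp
  | succ i ih =>
      have : l + (k:ℤ) * (i + 1) = (l + k * i) + k := by ring
      rw [this, hχ, ih]
  | pred i ih =>
      have : l + (k:ℤ) * (-i - 1) = (l + k * (-i)) - k := by ring
      rw [this, hneg, ih]

lemma em_scaled (k : ℕ) (hk : 1 ≤ k) (R : ℕ) {a b : ℝ} (hab : a < b) (l : ℤ)
    {f : ℝ → ℂ} (hf : ContDiffOn ℝ (R + 1) f (Set.Icc a b)) :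
    ∑ m ∈ Finset.Ioc ⌊(a - l)/(k:ℝ)⌋ ⌊(b - l)/(k:ℝ)⌋, f ((l:ℝ) + k * m)
      = (1 / (k : ℂ)) * (∫ u in a..b, f u)
        + (∑ r ∈ Finset.range (R + 1), (-1 : ℂ) ^ (r + 1) * (k : ℂ) ^ r *
            ((psir r ((b - (l:ℝ)) / (k:ℝ)) : ℂ) * iteratedDerivWithin r f (Set.Icc a b) b
              - (psir r ((a - (l:ℝ)) / (k:ℝ)) : ℂ) * iteratedDerivWithin r f (Set.Icc a b) a))
        + (-(k : ℂ)) ^ R * ∫ u in a..b, (psir R ((u - (l:ℝ)) / (k:ℝ)) : ℂ) *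
            iteratedDerivWithin (R + 1) f (Set.Icc a b) u := by
  have hk0 : (0:ℝ) < k := by exact_mod_cast hk
  have hkC : (k:ℂ) ≠ 0 := by exact_mod_cast hk0.ne'
  set D : ℕ → ℝ → ℂ := fun r => iteratedDerivWithin r f (Set.Icc a b) with hDdef
  set a' : ℝ := (a - l)/(k:ℝ) with ha'
  set b' : ℝ := (b - l)/(k:ℝ) with hb'
  have ha'b' : a' < b' := (div_lt_div_iff_of_pos_right hk0).mpr (sub_lt_sub_right hab _)
  have hla : (l:ℝ) + k * a' = a := by rw [ha']; field_simp; ring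
  have hlb : (l:ℝ) + k * b' = b := by rw [hb']; field_simp; ring
  have hmaps : ∀ x ∈ Set.Icc a' b', (l:ℝ) + k * x ∈ Set.Icc a b := by
    intro x hx
    have h1 := (div_le_iff₀ hk0).mp hx.1
    have h2 := (le_div_iff₀ hk0).mp hx.2
    constructor <;> nlinarith
  set F : ℕ → ℝ → ℂ := fun r u => (k:ℂ)^r * D r ((l:ℝ) + k*u) with hF
  have hud := uniqueDiffOn_Icc hab
  have hd : ∀ r ≤ R, ∀ x ∈ Set.Icc a' b',
      HasDerivWithinAt (F r) (F (r+1) x) (Set.Icc a' b') x := by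
    intro r hr x hx
    have hy := hmaps x hx
    have hdiff : DifferentiableWithinAt ℝ (D r) (Set.Icc a b) ((l:ℝ) + k*x) :=
      hf.differentiableOn_iteratedDerivWithin
        (by exact_mod_cast Nat.lt_succ_iff.mpr hr) hud _ hy
    have hDder : HasDerivWithinAt (D r) (D (r+1) ((l:ℝ) + k*x)) (Set.Icc a b) ((l:ℝ) + k*x) := by
      have h := hdiff.hasDerivWithinAt
      rwa [hDdef, ← iteratedDerivWithin_succ] at h
    have haff : HasDerivWithinAt (fun u:ℝ => (l:ℝ) + k*u) ((k:ℝ)) (Set.Icc a' b') x := by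
      simpa using ((((hasDerivAt_id x).const_mul (k:ℝ)).const_add (l:ℝ)).hasDerivWithinAt
        (s := Set.Icc a' b'))
    have hcomp := (hDder.scomp x haff (fun u hu => hmaps u hu)).const_mul ((k:ℂ)^r)
    refine hcomp.congr_deriv ?_
    symm
    rw [hF]
    simp only [Complex.real_smul]
    push_cast
    ring
  have hc : ContinuousOn (F (R+1)) (Set.Icc a' b') := by
    have hDc : ContinuousOn (D (R+1)) (Set.Icc a b) :=
      hf.continuousOn_iteratedDerivWithin le_rfl hud
    have haffc : ContinuousOn (fun u:ℝ => (l:ℝ) + k*u) (Set.Icc a' b') := by fun_prop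
    exact continuousOn_const.mul (hDc.comp haffc hmaps)
  have hbase := em_base R ha'b' hd hc
  have hsum0 : ∑ m ∈ Finset.Ioc ⌊a'⌋ ⌊b'⌋, f ((l:ℝ) + k * m)
      = ∑ m ∈ Finset.Ioc ⌊a'⌋ ⌊b'⌋, F 0 (m:ℝ) := by
    apply Finset.sum_congr rfl
    intro m _
    rw [hF, hDdef]
    simp [iteratedDerivWithin_zero]
  have hint0 : ∫ u in a'..b', F 0 u = (1 / (k : ℂ)) * ∫ u in a..b, f u := by
    have h1 : ∫ u in a'..b', F 0 u = ∫ u in a'..b', f ((l:ℝ) + (k:ℝ) * u) := by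
      apply intervalIntegral.integral_congr
      intro u _
      rw [hF, hDdef]
      simp [iteratedDerivWithin_zero]
    rw [h1, intervalIntegral.integral_comp_add_mul f hk0.ne' (l:ℝ), hla, hlb,
      Complex.real_smul]
    push_cast
    rw [one_div]
  have hintR : ∫ u in a'..b', (psir R u : ℂ) * F (R+1) u
      = (k:ℂ)^(R+1) * ((k:ℝ)⁻¹ • ∫ v in a..b, (psir R ((v - (l:ℝ)) / (k:ℝ)) : ℂ) * D (R+1) v) := by
    have h2 : (fun u => (psir R u : ℂ) * F (R+1) u)
        = fun u => (k:ℂ)^(R+1) *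
            ((psir R (((l:ℝ) + (k:ℝ)*u - (l:ℝ)) / (k:ℝ)) : ℂ) * D (R+1) ((l:ℝ) + (k:ℝ)*u)) := by
      funext u
      rw [hF]
      have : ((l:ℝ) + (k:ℝ)*u - (l:ℝ)) / (k:ℝ) = u := by field_simp; ring
      rw [this]
      ring
    rw [h2, intervalIntegral.integral_const_mul,
      intervalIntegral.integral_comp_add_mul
        (fun v => (psir R ((v - (l:ℝ)) / (k:ℝ)) : ℂ) * D (R+1) v) hk0.ne' (l:ℝ), hla, hlb]
  rw [hsum0, hbase, hint0, hintR]
  have hsumcongr : ∑ r ∈ Finset.range (R+1), (-1:ℂ)^(r+1) *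
        ((psir r b' : ℂ) * F r b' - (psir r a' : ℂ) * F r a')
      = ∑ r ∈ Finset.range (R + 1), (-1 : ℂ) ^ (r + 1) * (k : ℂ) ^ r *
          ((psir r ((b - (l:ℝ)) / (k:ℝ)) : ℂ) * D r b
            - (psir r ((a - (l:ℝ)) / (k:ℝ)) : ℂ) * D r a) := by
    apply Finset.sum_congr rfl
    intro r _
    simp only [hF]
    rw [hla, hlb, ha', hb']
    ring
  rw [hsumcongr, Complex.real_smul]
  have hneg : (-(k:ℂ))^R = (-1:ℂ)^R * (k:ℂ)^R := by rw [neg_pow]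
  rw [hneg]
  push_cast
  field_simp
  ring

/-- Bernoulli-polynomial form of the weighted Euler–Maclaurin formula. -/
theorem weighted_euler_maclaurin_bernoulli
    (k : ℕ) (hk : 1 ≤ k) (χ : ℤ → ℂ) (hχ : ∀ n : ℤ, χ (n + (k : ℤ)) = χ n)
    (R : ℕ) (a b : ℝ) (hab : a < b)
    (f : ℝ → ℂ) (hf : ContDiffOn ℝ (R + 1) f (Set.Icc a b)) :
    ∑ n ∈ Finset.Ioc ⌊a⌋ ⌊b⌋, χ n * f (n : ℝ)
      = ∑ l ∈ Finset.Icc (1 : ℤ) (k : ℤ), χ l *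
          ((1 / (k : ℂ)) * (∫ u in a..b, f u)
            + (∑ r ∈ Finset.range (R + 1), (-1 : ℂ) ^ (r + 1) * (k : ℂ) ^ r *
                ((psir r ((b - (l : ℝ)) / (k : ℝ)) : ℂ) * iteratedDerivWithin r f (Set.Icc a b) b
                  - (psir r ((a - (l : ℝ)) / (k : ℝ)) : ℂ) *
                      iteratedDerivWithin r f (Set.Icc a b) a))
            + (-(k : ℂ)) ^ R *
                ∫ u in a..b, (psir R ((u - (l : ℝ)) / (k : ℝ)) : ℂ) *
                  iteratedDerivWithin (R + 1) f (Set.Icc a b) u) := by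
  rw [sum_Ioc_reindex k hk (fun n => χ n * f (n:ℝ))]
  apply Finset.sum_congr rfl
  intro l _
  rw [← em_scaled k hk R hab l hf, Finset.mul_sum]
  apply Finset.sum_congr rfl
  intro m _
  rw [chi_periodic χ hχ l m]
  push_cast
  ring
end
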